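/- arXiv:1010.0670 — 3 statements merged into one kernel-verified Lean document; each statement's English description precedes it below -/
import Mathlib

section
/- Let 𝒳 and 𝒴 be finite nonempty sets, n ≥ 2 and m positive integers with m ≤ n, and x ∈ 𝒳ⁿ, y ∈ 𝒴ⁿ arbitrary deterministic sequences. Let I be a uniformly random m-element subset of {1,…,n}, and define the joint type estimate P̂_I(a,b) := |{i ∈ I : (x_i,y_i) = (a,b)}|/m. Then the mean squared error summed over all symbol pairs satisfies Σ_{(a,b) ∈ 𝒳×𝒴} E[(P̂_I(a,b) − P_{x,y}(a,b))²] ≤ 1/m. -/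
/-!
For a class `S` of `k` positions among `n`, the count `X = #(I ∩ S)` in a uniform `m`-subset `I`
is hypergeometric. Counting pairs `T ⊆ I ∩ S` with `#T = j` gives the factorial moments
`C(n, j) · ∑_I C(X, j) = C(n, m) · C(k, j) · C(m, j)`, and the moments `j ≤ 2` give the exact
variance `(n - 1) · ∑_I (n X - m k)² = C(n, m) · m k (n - k)(n - m)`. As `(n - k)(n - m) ≤ n (n - 1)`,
the mean squared error of `X / m` is at most `k / (n m)`; the classes `(x i, y i) = (a, b)`
partition the `n` positions, so summing gives `1 / m`.
-/

open Finset

section Hypergeometric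

variable {α : Type*} [Fintype α] [DecidableEq α]

theorem sum_powersetCard_choose_card_inter (S : Finset α) {m j : ℕ} (hjm : j ≤ m) :
    ∑ I ∈ powersetCard m univ, (#(I ∩ S)).choose j
      = (#S).choose j * (Fintype.card α - j).choose (m - j) := by
  have hchoose (I : Finset α) :
      (#(I ∩ S)).choose j = #((S.powersetCard j).bipartiteAbove (fun I T => T ⊆ I) I) := by
    rw [← card_powersetCard, inter_comm, bipartiteAbove]
    congr 1
    ext T
    simp [subset_inter_iff, and_comm, and_assoc]
  have hcount : ∀ T ∈ S.powersetCard j,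
      #((powersetCard m univ).bipartiteBelow (fun I T => T ⊆ I) T)
        = (Fintype.card α - j).choose (m - j) := by
    intro T hT
    rw [mem_powersetCard] at hT
    rw [bipartiteBelow, card_filter_powersetCard_subset T univ m (subset_univ T) (hT.2 ▸ hjm),
      card_univ, hT.2]
  simp_rw [hchoose]
  rw [sum_card_bipartiteAbove_eq_sum_card_bipartiteBelow, sum_congr rfl hcount, sum_const,
    card_powersetCard, smul_eq_mul]

theorem choose_mul_sum_powersetCard_choose_card_inter (S : Finset α) (m j : ℕ) :
    (Fintype.card α).choose j * ∑ I ∈ powersetCard m univ, (#(I ∩ S)).choose j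
      = (Fintype.card α).choose m * (#S).choose j * m.choose j := by
  rcases le_or_gt j m with hjm | hmj
  · rw [sum_powersetCard_choose_card_inter S hjm, mul_left_comm, ← Nat.choose_mul hjm]
    ring
  · have hvanish : ∀ I ∈ powersetCard m (univ : Finset α), (#(I ∩ S)).choose j = 0 := by
      intro I hI
      rw [mem_powersetCard] at hI
      exact Nat.choose_eq_zero_of_lt ((card_le_card inter_subset_left).trans_lt (hI.2 ▸ hmj))
    rw [sum_eq_zero hvanish, Nat.choose_eq_zero_of_lt hmj]
    simp

theorem hypergeometric_variance (S : Finset α) (m : ℕ) :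
    ((Fintype.card α : ℝ) - 1) *
        ∑ I ∈ powersetCard m univ, ((Fintype.card α : ℝ) * #(I ∩ S) - m * #S) ^ 2
      = (Fintype.card α).choose m * m * #S * (Fintype.card α - #S) * (Fintype.card α - m) := by
  have moment (j : ℕ) := congrArg (Nat.cast (R := ℝ))
    (choose_mul_sum_powersetCard_choose_card_inter S m j)
  have h₀ := moment 0
  have h₁ := moment 1
  have h₂ := moment 2
  push_cast [Nat.choose_zero_right, Nat.choose_one_right, sum_const, nsmul_eq_mul] at h₀ h₁ h₂
  rw [Nat.cast_choose_two ℝ (Fintype.card α), Nat.cast_choose_two ℝ #S,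
    Nat.cast_choose_two ℝ m] at h₂
  set n : ℝ := (Fintype.card α : ℝ)
  set k : ℝ := (#S : ℝ)
  have hsq (I : Finset α) : (n * #(I ∩ S) - m * k) ^ 2
      = 2 * n ^ 2 * ((#(I ∩ S)).choose 2 : ℝ) + (n ^ 2 - 2 * n * m * k) * #(I ∩ S)
        + m ^ 2 * k ^ 2 := by
    rw [Nat.cast_choose_two]
    ring
  simp only [hsq, sum_add_distrib, ← mul_sum, sum_const, nsmul_eq_mul]
  linear_combination (4 * n) * h₂ + (n - 1) * (n - 2 * m * k) * h₁ + (n - 1) * m ^ 2 * k ^ 2 * h₀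

theorem hypergeometric_mse_le (S : Finset α) {m : ℕ} (hα : 2 ≤ Fintype.card α) (hm : 0 < m) :
    (∑ I ∈ powersetCard m univ, ((#(I ∩ S) : ℝ) / m - (#S : ℝ) / Fintype.card α) ^ 2)
        / (Fintype.card α).choose m
      ≤ #S / (Fintype.card α * m) := by
  have hvar := hypergeometric_variance S m
  have hn : (2 : ℝ) ≤ Fintype.card α := by exact_mod_cast hα
  have hm : (1 : ℝ) ≤ m := by exact_mod_cast hm
  have hkn : (#S : ℝ) ≤ Fintype.card α := by exact_mod_cast card_le_univ S
  have hk : (0 : ℝ) ≤ #S := Nat.cast_nonneg _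
  set n : ℝ := (Fintype.card α : ℝ)
  set k : ℝ := (#S : ℝ)
  set N : ℝ := ((Fintype.card α).choose m : ℝ)
  have hNmk : 0 ≤ N * m * k := by positivity
  have hsum_le : ∑ I ∈ powersetCard m univ, (n * #(I ∩ S) - m * k) ^ 2 ≤ N * m * k * n := by
    refine le_of_mul_le_mul_left ?_ (by linarith : (0 : ℝ) < n - 1)
    calc (n - 1) * ∑ I ∈ powersetCard m univ, (n * #(I ∩ S) - m * k) ^ 2
        = N * m * k * ((n - k) * (n - m)) := by rw [hvar]; ring
      _ ≤ N * m * k * (n * (n - 1)) := by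
        refine mul_le_mul_of_nonneg_left ?_ hNmk
        calc (n - k) * (n - m) ≤ (n - k) * (n - 1) := by gcongr
          _ ≤ n * (n - 1) := by gcongr <;> linarith
      _ = (n - 1) * (N * m * k * n) := by ring
  have hdiff (I : Finset α) : ((#(I ∩ S) : ℝ) / m - k / n) ^ 2
      = (n * #(I ∩ S) - m * k) ^ 2 / (n * m) ^ 2 := by
    field_simp
  refine div_le_of_le_mul₀ (Nat.cast_nonneg _) (by positivity) ?_
  calc ∑ I ∈ powersetCard m univ, ((#(I ∩ S) : ℝ) / m - k / n) ^ 2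
      = (∑ I ∈ powersetCard m univ, (n * #(I ∩ S) - m * k) ^ 2) / (n * m) ^ 2 := by
        rw [sum_div]; exact sum_congr rfl fun I _ => hdiff I
    _ ≤ N * m * k * n / (n * m) ^ 2 := by gcongr
    _ = k / (n * m) * N := by field_simp

end Hypergeometric

theorem joint_type_estimate_mse_general
    {𝒳 𝒴 : Type*} [Fintype 𝒳] [Fintype 𝒴]
    [DecidableEq 𝒳] [DecidableEq 𝒴]
    (n m : ℕ) (hn : 2 ≤ n) (hm : 0 < m)
    (x : Fin n → 𝒳) (y : Fin n → 𝒴) :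
    ∑ ab : 𝒳 × 𝒴,
      (∑ I ∈ Finset.powersetCard m (Finset.univ : Finset (Fin n)),
          (((I.filter (fun i => (x i, y i) = ab)).card : ℝ) / (m : ℝ)
            - ((Finset.univ.filter (fun i : Fin n => (x i, y i) = ab)).card : ℝ) / (n : ℝ)) ^ 2)
        / (n.choose m : ℝ)
      ≤ 1 / (m : ℝ) := by
  set S : 𝒳 × 𝒴 → Finset (Fin n) := fun ab => univ.filter fun i => (x i, y i) = ab
  have hfilter (ab : 𝒳 × 𝒴) (I : Finset (Fin n)) :
      I.filter (fun i => (x i, y i) = ab) = I ∩ S ab := by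
    ext; simp [S]
  have hpartition : ∑ ab, (#(S ab) : ℝ) = n := by
    exact_mod_cast (card_eq_sum_card_fiberwise fun i _ => mem_univ (x i, y i)).symm.trans
      (card_fin n)
  calc _ ≤ ∑ ab, (#(S ab) : ℝ) / (n * m) := by
        refine sum_le_sum fun ab _ => ?_
        simpa only [hfilter, univ_inter, Fintype.card_fin] using
          hypergeometric_mse_le (S ab) (hn.trans_eq (Fintype.card_fin n).symm) hm
    _ = 1 / m := by
        rw [← sum_div, hpartition]
        field_simp

/-- The mean squared error of the subsampled joint-type estimate, summed over
all symbol pairs, is at most 1/m. -/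
theorem joint_type_estimate_mse
    {𝒳 𝒴 : Type*} [Fintype 𝒳] [Nonempty 𝒳] [Fintype 𝒴] [Nonempty 𝒴]
    [DecidableEq 𝒳] [DecidableEq 𝒴]
    (n m : ℕ) (hn : 2 ≤ n) (hm : 0 < m) (hmn : m ≤ n)
    (x : Fin n → 𝒳) (y : Fin n → 𝒴) :
    ∑ ab : 𝒳 × 𝒴,
      (∑ I ∈ Finset.powersetCard m (Finset.univ : Finset (Fin n)),
          (((I.filter (fun i => (x i, y i) = ab)).card : ℝ) / (m : ℝ)
            - ((Finset.univ.filter (fun i : Fin n => (x i, y i) = ab)).card : ℝ) / (n : ℝ)) ^ 2)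
        / (n.choose m : ℝ)
      ≤ 1 / (m : ℝ) :=
  joint_type_estimate_mse_general n m hn hm x y
end

section
/- Let 𝒳 and 𝒴 be finite nonempty sets, n ≥ 2 and m positive integers with m ≤ n, and x ∈ 𝒳ⁿ, y ∈ 𝒴ⁿ arbitrary deterministic sequences. Let I be a uniformly random m-element subset of {1,…,n}, and define the joint type estimate P̂_I(a,b) := |{i ∈ I : (x_i,y_i) = (a,b)}|/m. Then the expected L₂ norm of the estimation error satisfies E[ √( Σ_{(a,b) ∈ 𝒳×𝒴} (P̂_I(a,b) − P_{x,y}(a,b))² ) ] ≤ 1/√m. -/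
/-!
In the coordinate `(a, b)` the estimation error is `(1/m) ∑_{i ∈ I} f i`, where `f` is the
indicator of `{i | (x i, y i) = (a, b)}` minus its mean. Expanding the square and counting the
`m`-subsets containing one or two given points, `∑_I (∑_{i ∈ I} f i)²` equals
`c₂ (∑ f)² + (c₁ - c₂) ∑ f²` with `c₁ = C(n-1, n-m)`, `c₂ = C(n-2, n-m)`. Since `∑ f = 0` and
`n c₁ = m C(n, m)`, the mean squared error in coordinate `(a, b)` is at most `P(a, b) / m`;
summing over `(a, b)` bounds the mean squared L₂ error by `1/m`, and Cauchy–Schwarz passes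
to the mean of its square root.
-/

open Finset

namespace Finset

/-- Unlike `Finset.card_filter_powersetCard_subset`, this form needs no `#t ≤ m`:
otherwise both sides vanish. -/
theorem card_filter_powersetCard_subset_of_le_card {α : Type*} [DecidableEq α]
    {s t : Finset α} {m : ℕ} (hts : t ⊆ s) (hm : m ≤ #s) :
    #((s.powersetCard m).filter (t ⊆ ·)) = (#s - #t).choose (#s - m) := by
  by_cases htm : #t ≤ m
  · rw [card_filter_powersetCard_subset t s m hts htm]
    exact Nat.choose_symm_of_eq_add (by omega)
  · have hts' := card_le_card hts
    rw [Nat.choose_eq_zero_of_lt (by omega), card_eq_zero, filter_eq_empty_iff]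
    intro I hI htI
    exact htm ((card_le_card htI).trans (mem_powersetCard.1 hI).2.le)

end Finset

theorem Nat.mul_choose_sub_one_sub {n m : ℕ} (hm : m ≤ n) :
    n * (n - 1).choose (n - m) = n.choose m * m := by
  rcases Nat.eq_zero_or_pos m with rfl | hm0
  · rcases Nat.eq_zero_or_pos n with rfl | hn
    · rfl
    · simp [Nat.choose_eq_zero_of_lt (show n - 1 < n by omega)]
  · obtain ⟨k, rfl⟩ : ∃ k, n = k + 1 := ⟨n - 1, by omega⟩
    obtain ⟨j, rfl⟩ : ∃ j, m = j + 1 := ⟨m - 1, by omega⟩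
    rw [Nat.add_sub_cancel, Nat.choose_symm_of_eq_add (b := j) (by omega)]
    exact Nat.add_one_mul_choose_eq k j

section

variable {ι : Type*} [Fintype ι]

theorem sum_powersetCard_sq_sum_eq [DecidableEq ι] (f : ι → ℝ) (m : ℕ)
    (hm : m ≤ Fintype.card ι) :
    ∑ I ∈ univ.powersetCard m, (∑ i ∈ I, f i) ^ 2
      = ((Fintype.card ι - 2).choose (Fintype.card ι - m) : ℝ) * (∑ i, f i) ^ 2
        + (((Fintype.card ι - 1).choose (Fintype.card ι - m) : ℝ)
          - (Fintype.card ι - 2).choose (Fintype.card ι - m)) * ∑ i, f i ^ 2 := by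
  set c₁ : ℝ := ↑((Fintype.card ι - 1).choose (Fintype.card ι - m))
  set c₂ : ℝ := ↑((Fintype.card ι - 2).choose (Fintype.card ι - m))
  have hpair : ∀ i j : ι, (#((univ.powersetCard m).filter ({i, j} ⊆ ·)) : ℝ)
      = c₂ + if i = j then c₁ - c₂ else 0 := by
    intro i j
    rw [card_filter_powersetCard_subset_of_le_card (subset_univ _) (by simpa using hm), card_univ]
    by_cases hij : i = j
    · simp [hij, c₁]
    · simp [hij, card_pair hij, c₂]
  have hsq : ∀ I : Finset ι, (∑ i ∈ I, f i) ^ 2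
      = ∑ i, ∑ j, if {i, j} ⊆ I then f i * f j else 0 := by
    intro I
    rw [sq, ← Fintype.sum_ite_mem, sum_mul_sum]
    refine sum_congr rfl fun i _ => sum_congr rfl fun j _ => ?_
    by_cases hi : i ∈ I <;> by_cases hj : j ∈ I <;> simp [hi, hj, insert_subset_iff]
  calc ∑ I ∈ univ.powersetCard m, (∑ i ∈ I, f i) ^ 2
      = ∑ i, ∑ j, f i * f j * #((univ.powersetCard m).filter ({i, j} ⊆ ·)) := by
        simp only [hsq]
        rw [sum_comm]
        refine sum_congr rfl fun i _ => ?_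
        rw [sum_comm]
        refine sum_congr rfl fun j _ => ?_
        rw [sum_ite, sum_const_zero, add_zero, sum_const, nsmul_eq_mul, mul_comm]
    _ = c₂ * (∑ i, f i) ^ 2 + (c₁ - c₂) * ∑ i, f i ^ 2 := by
        simp only [hpair, mul_add, sum_add_distrib, mul_ite, mul_zero, sum_ite_eq, mem_univ,
          if_true, sq, mul_sum, sum_mul]
        congr 1 <;> refine sum_congr rfl fun i _ => ?_
        · exact sum_congr rfl fun j _ => by ring
        · ring

theorem sum_powersetCard_sq_sub_mean_le (g : ι → ℝ) {m : ℕ} (hm : 0 < m)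
    (hmn : m ≤ Fintype.card ι) :
    ∑ I ∈ univ.powersetCard m, ((∑ i ∈ I, g i) / m - (∑ i, g i) / Fintype.card ι) ^ 2
      ≤ (Fintype.card ι).choose m * (∑ i, g i ^ 2) / (m * Fintype.card ι) := by
  classical
  set n := Fintype.card ι
  have hn : (0 : ℝ) < n := by exact_mod_cast hm.trans_le hmn
  set μ := (∑ i, g i) / n
  have hcentered : ∑ i, (g i - μ) = 0 := by
    rw [sum_sub_distrib, sum_const, card_univ, nsmul_eq_mul]
    exact sub_eq_zero.2 (mul_div_cancel₀ _ hn.ne').symm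
  have hdev : ∀ I ∈ univ.powersetCard m,
      (∑ i ∈ I, g i) / m - μ = (∑ i ∈ I, (g i - μ)) / m := by
    intro I hI
    rw [sum_sub_distrib, sum_const, (mem_powersetCard.1 hI).2, nsmul_eq_mul]
    field_simp
  have hvar : ∑ i, (g i - μ) ^ 2 ≤ ∑ i, g i ^ 2 := by
    have : ∑ i, (g i - μ) ^ 2 = ∑ i, g i ^ 2 - μ * ∑ i, g i - μ * ∑ i, (g i - μ) := by
      simp only [mul_sum, ← sum_sub_distrib]
      exact sum_congr rfl fun i _ => by ring
    rw [this, hcentered, mul_zero, sub_zero, sub_le_self_iff, div_mul_eq_mul_div, ← sq]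
    positivity
  have hchoose : (n : ℝ) * ((n - 1).choose (n - m) : ℕ) = n.choose m * m := by
    exact_mod_cast Nat.mul_choose_sub_one_sub hmn
  calc ∑ I ∈ univ.powersetCard m, ((∑ i ∈ I, g i) / m - μ) ^ 2
      = (∑ I ∈ univ.powersetCard m, (∑ i ∈ I, (g i - μ)) ^ 2) / m ^ 2 := by
        rw [sum_div]
        exact sum_congr rfl fun I hI => by rw [hdev I hI, div_pow]
    _ ≤ ((n - 1).choose (n - m) : ℕ) * (∑ i, g i ^ 2) / m ^ 2 := by
        rw [sum_powersetCard_sq_sum_eq _ m hmn, hcentered, zero_pow two_ne_zero, mul_zero,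
          zero_add]
        gcongr ?_ / _
        exact mul_le_mul (sub_le_self _ (Nat.cast_nonneg _)) hvar
          (sum_nonneg fun _ _ => sq_nonneg _) (Nat.cast_nonneg _)
    _ = n.choose m * (∑ i, g i ^ 2) / (m * n) := by
        field_simp
        linear_combination (∑ i, g i ^ 2) * hchoose

theorem sum_powersetCard_sq_card_filter_sub_le (p : ι → Prop) [DecidablePred p] {m : ℕ}
    (hm : 0 < m) (hmn : m ≤ Fintype.card ι) :
    ∑ I ∈ univ.powersetCard m,
        ((#(I.filter p) : ℝ) / m - (#(univ.filter p) : ℝ) / Fintype.card ι) ^ 2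
      ≤ (Fintype.card ι).choose m * #(univ.filter p) / (m * Fintype.card ι) := by
  have h := sum_powersetCard_sq_sub_mean_le (fun i => if p i then (1 : ℝ) else 0) hm hmn
  simpa only [ite_pow, one_pow, zero_pow two_ne_zero, sum_boole] using h

end

theorem Real.sum_sqrt_le_sqrt_card_mul_sum {κ : Type*} (s : Finset κ) {F : κ → ℝ}
    (hF : ∀ i, 0 ≤ F i) : ∑ i ∈ s, √(F i) ≤ √(#s * ∑ i ∈ s, F i) := by
  have h := Real.sum_sqrt_mul_sqrt_le s hF (g := fun _ => 1) fun _ => zero_le_one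
  simpa [Real.sqrt_mul', mul_comm, sum_nonneg fun i _ => hF i] using h

theorem joint_type_estimate_expected_L2_general
    {𝒳 𝒴 : Type*} [Fintype 𝒳] [Fintype 𝒴]
    [DecidableEq 𝒳] [DecidableEq 𝒴]
    (n m : ℕ) (hm : 0 < m) (hmn : m ≤ n)
    (x : Fin n → 𝒳) (y : Fin n → 𝒴) :
    (∑ I ∈ Finset.powersetCard m (Finset.univ : Finset (Fin n)),
        Real.sqrt (∑ ab : 𝒳 × 𝒴,
          (((I.filter (fun i => (x i, y i) = ab)).card : ℝ) / (m : ℝ)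
            - ((Finset.univ.filter (fun i : Fin n => (x i, y i) = ab)).card : ℝ) / (n : ℝ)) ^ 2))
        / (n.choose m : ℝ)
      ≤ 1 / Real.sqrt (m : ℝ) := by
  have hN : (0 : ℝ) < n.choose m := by exact_mod_cast Nat.choose_pos hmn
  have hn : (n : ℝ) ≠ 0 := by exact_mod_cast (hm.trans_le hmn).ne'
  have htypes : ∑ ab : 𝒳 × 𝒴, (#(univ.filter fun i : Fin n => (x i, y i) = ab) : ℝ) = n := by
    exact_mod_cast (card_eq_sum_card_fiberwise fun i _ => mem_univ (x i, y i)).symm.trans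
      (card_fin n)
  have hmse : ∑ I ∈ univ.powersetCard m, ∑ ab : 𝒳 × 𝒴,
      ((#(I.filter fun i => (x i, y i) = ab) : ℝ) / m
        - (#(univ.filter fun i : Fin n => (x i, y i) = ab) : ℝ) / n) ^ 2 ≤ n.choose m / m := by
    rw [sum_comm]
    calc _ ≤ ∑ ab : 𝒳 × 𝒴, (n.choose m : ℝ) * #(univ.filter fun i : Fin n => (x i, y i) = ab)
            / (m * n) := sum_le_sum fun ab _ => by
          simpa only [Fintype.card_fin] using
            sum_powersetCard_sq_card_filter_sub_le (fun i : Fin n => (x i, y i) = ab) hm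
              (by simpa using hmn)
      _ = n.choose m / m := by
          rw [← sum_div, ← mul_sum, htypes]
          field_simp
  calc _ ≤ √(n.choose m * (n.choose m / m)) / n.choose m := by
        gcongr
        refine (Real.sum_sqrt_le_sqrt_card_mul_sum _ fun I => ?_).trans ?_
        · exact sum_nonneg fun _ _ => sq_nonneg _
        · rw [card_powersetCard, card_univ, Fintype.card_fin]
          exact Real.sqrt_le_sqrt (mul_le_mul_of_nonneg_left hmse hN.le)
    _ = 1 / √m := by
        rw [← mul_div_assoc, ← sq, Real.sqrt_div (sq_nonneg _), Real.sqrt_sq hN.le]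
        field_simp

/-- The expected L₂ norm of the joint-type estimation error is at most 1/√m. -/
theorem joint_type_estimate_expected_L2
    {𝒳 𝒴 : Type*} [Fintype 𝒳] [Nonempty 𝒳] [Fintype 𝒴] [Nonempty 𝒴]
    [DecidableEq 𝒳] [DecidableEq 𝒴]
    (n m : ℕ) (hn : 2 ≤ n) (hm : 0 < m) (hmn : m ≤ n)
    (x : Fin n → 𝒳) (y : Fin n → 𝒴) :
    (∑ I ∈ Finset.powersetCard m (Finset.univ : Finset (Fin n)),
        Real.sqrt (∑ ab : 𝒳 × 𝒴,
          (((I.filter (fun i => (x i, y i) = ab)).card : ℝ) / (m : ℝ)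
            - ((Finset.univ.filter (fun i : Fin n => (x i, y i) = ab)).card : ℝ) / (n : ℝ)) ^ 2))
        / (n.choose m : ℝ)
      ≤ 1 / Real.sqrt (m : ℝ) :=
  joint_type_estimate_expected_L2_general n m hm hmn x y
end

section
/- Let 𝒳 and 𝒴 be finite nonempty sets, f₁ : 𝒳 × 𝒴 → ℝ any function, n ≥ 2 and m positive integers with m ≤ n. For every pair of deterministic sequences x ∈ 𝒳ⁿ and y ∈ 𝒴ⁿ, if I is a uniformly random m-element subset of {1,…,n} and F̂_I := (1/m)·Σ_{i ∈ I} f₁(x_i,y_i), then the expected absolute error satisfies E[ |F̂_I − (1/n)·Σ_{i=1}^n f₁(x_i,y_i)| ] ≤ ‖f₁‖₂ / √m, where ‖f₁‖₂ := √(Σ_{(a,b) ∈ 𝒳×𝒴} f₁(a,b)²). In particular, since this holds for all sequences x, y of length n, the maximal (worst-case over sequences) expected absolute error is at most ‖f₁‖₂/√m, independent of n. -/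
/-!
Write gᵢ = f₁(xᵢ, yᵢ) and hᵢ = gᵢ - ḡ. For |I| = m the error is (1/m) Σ_{i ∈ I} hᵢ. Expanding
the square, (Σ_{i ∈ I} hᵢ)² summed over all m-sets I counts hᵢ hⱼ once for each m-set containing
{i, j}; this number is a constant a for i = j and a constant b ≥ 0 for i ≠ j, so the sum is
(a - b) Σ hᵢ² + b (Σ hᵢ)² = (a - b) Σ hᵢ² ≤ a Σ hᵢ², as Σ hᵢ = 0. Since n a = m C(n, m), the mean
squared error is at most (1/(mn)) Σ hᵢ² ≤ (1/(mn)) Σ gᵢ² ≤ ‖f₁‖₂² / m, each gᵢ² being a term of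
‖f₁‖₂². Cauchy–Schwarz, E|X| ≤ √(E X²), finishes.
-/

open Finset

lemma Nat.mul_choose_sub_one {n k : ℕ} (hk : 0 < k) :
    n * (n - 1).choose (k - 1) = n.choose k * k := by
  obtain ⟨k, rfl⟩ := Nat.exists_eq_add_of_lt hk
  cases n with
  | zero => simp
  | succ n => simpa using Nat.add_one_mul_choose_eq n k

namespace Finset

lemma card_filter_powersetCard_superset {α : Type*} [DecidableEq α] {s t : Finset α}
    (hst : s ⊆ t) (n : ℕ) :
    #{I ∈ t.powersetCard n | s ⊆ I} = if #s ≤ n then (#t - #s).choose (n - #s) else 0 := by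
  split_ifs with hsn
  · exact card_filter_powersetCard_subset s t n hst hsn
  · refine card_eq_zero.mpr (filter_eq_empty_iff.mpr fun I hI hsI => hsn ?_)
    exact (card_le_card hsI).trans (mem_powersetCard.mp hI).2.le

variable {ι R : Type*} [Fintype ι] [DecidableEq ι] [CommSemiring R]

lemma sq_sum_eq_sum_sum_ite_pair_subset (I : Finset ι) (h : ι → R) :
    (∑ i ∈ I, h i) ^ 2 = ∑ i, ∑ j, if {i, j} ⊆ I then h i * h j else 0 := by
  simp [insert_subset_iff, ite_and, sq, sum_mul_sum, sum_ite_mem]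

lemma sum_sq_sum_eq_sum_mul_card_filter (S : Finset (Finset ι)) (h : ι → R) :
    ∑ I ∈ S, (∑ i ∈ I, h i) ^ 2 = ∑ i, ∑ j, h i * h j * #{I ∈ S | {i, j} ⊆ I} := by
  simp_rw [sq_sum_eq_sum_sum_ite_pair_subset]
  rw [sum_comm]
  refine sum_congr rfl fun i _ => ?_
  rw [sum_comm]
  refine sum_congr rfl fun j _ => ?_
  rw [← sum_filter, sum_const, nsmul_eq_mul, mul_comm]

end Finset

lemma sum_abs_div_card_le_sqrt_sum_sq_div_card {α : Type*} (S : Finset α) (e : α → ℝ) :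
    (∑ a ∈ S, |e a|) / #S ≤ √((∑ a ∈ S, e a ^ 2) / #S) :=
  Real.le_sqrt_of_sq_le <| by
    simpa [sq_abs] using sum_div_card_sq_le_sum_sq_div_card (s := S) (f := fun a => |e a|)

section

variable {ι : Type*} [Fintype ι]

lemma sum_sub_mean_eq_zero [Nonempty ι] (g : ι → ℝ) :
    ∑ i, (g i - (∑ j, g j) / Fintype.card ι) = 0 := by
  rw [sum_sub_distrib, sum_const, card_univ, nsmul_eq_mul, mul_div_cancel₀ _ (by positivity),
    sub_self]

lemma sum_sub_mean_sq_le_sum_sq (g : ι → ℝ) :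
    ∑ i, (g i - (∑ j, g j) / Fintype.card ι) ^ 2 ≤ ∑ i, g i ^ 2 := by
  rcases isEmpty_or_nonempty ι with hι | hι
  · simp
  have hexpand : ∑ i, (g i - (∑ j, g j) / Fintype.card ι) ^ 2
      = ∑ i, g i ^ 2 - (∑ j, g j) ^ 2 / Fintype.card ι := by
    simp only [sub_sq, sum_add_distrib, sum_sub_distrib, ← sum_mul, ← mul_sum, sum_const,
      card_univ, nsmul_eq_mul]
    field_simp
    ring
  rw [hexpand]
  exact sub_le_self _ (by positivity)

lemma sampling_error_eq (g : ι → ℝ) {m : ℕ} (hm : m ≠ 0) {I : Finset ι} (hI : #I = m) :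
    (1 / m : ℝ) * ∑ i ∈ I, g i - (1 / Fintype.card ι : ℝ) * ∑ i, g i
      = (1 / m : ℝ) * ∑ i ∈ I, (g i - (∑ j, g j) / Fintype.card ι) := by
  rw [sum_sub_distrib, sum_const, hI, nsmul_eq_mul]
  field_simp

variable [DecidableEq ι]

lemma sum_powersetCard_sq_sum_le {m : ℕ} (hm : 0 < m) {h : ι → ℝ} (hh : ∑ i, h i = 0) :
    ∑ I ∈ powersetCard m univ, (∑ i ∈ I, h i) ^ 2
      ≤ ((Fintype.card ι - 1).choose (m - 1) : ℕ) * ∑ i, h i ^ 2 := by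
  set a : ℝ := ↑((Fintype.card ι - 1).choose (m - 1))
  set b : ℝ := if 2 ≤ m then ↑((Fintype.card ι - 2).choose (m - 2)) else 0
  have hcount : ∀ i j : ι, (#{I ∈ powersetCard m univ | {i, j} ⊆ I} : ℝ)
      = b + if i = j then a - b else 0 := by
    intro i j
    rw [card_filter_powersetCard_superset (subset_univ _), card_univ]
    split_ifs <;> simp_all [a, b, Nat.one_le_iff_ne_zero, hm.ne']
  have hb : 0 ≤ b * ∑ i, h i ^ 2 := by positivity
  calc ∑ I ∈ powersetCard m univ, (∑ i ∈ I, h i) ^ 2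
      = ∑ i, ∑ j, h i * h j * (b + if i = j then a - b else 0) := by
        simp_rw [sum_sq_sum_eq_sum_mul_card_filter, hcount]
    _ = b * (∑ i, h i) ^ 2 + (a - b) * ∑ i, h i ^ 2 := by
        simp only [mul_add, mul_ite, mul_zero, sum_add_distrib, sum_ite_eq, mem_univ, if_true,
          ← sum_mul, ← sum_mul_sum, sq]
        ring
    _ ≤ a * ∑ i, h i ^ 2 := by
        rw [hh]
        linarith

lemma sum_sq_sampling_error_div_choose_le (g : ι → ℝ) {m : ℕ} (hm : 0 < m)
    (hmn : m ≤ Fintype.card ι) :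
    (∑ I ∈ powersetCard m univ,
        ((1 / m : ℝ) * ∑ i ∈ I, g i - (1 / Fintype.card ι : ℝ) * ∑ i, g i) ^ 2)
        / (Fintype.card ι).choose m
      ≤ (∑ i, g i ^ 2) / Fintype.card ι / m := by
  rw [sum_congr rfl fun I hI => by rw [sampling_error_eq g hm.ne' (mem_powersetCard.mp hI).2]]
  have : Nonempty ι := Fintype.card_pos_iff.mp (hm.trans_le hmn)
  set n := Fintype.card ι
  set h : ι → ℝ := fun i => g i - (∑ j, g j) / n
  have hn : (n : ℝ) ≠ 0 := by positivity
  have hN : (n.choose m : ℝ) ≠ 0 := by exact_mod_cast (Nat.choose_pos hmn).ne'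
  have hcount : (n : ℝ) * ((n - 1).choose (m - 1) : ℕ) = n.choose m * m := by
    exact_mod_cast Nat.mul_choose_sub_one hm
  calc (∑ I ∈ powersetCard m univ, ((1 / m : ℝ) * ∑ i ∈ I, h i) ^ 2) / n.choose m
      = (∑ I ∈ powersetCard m univ, (∑ i ∈ I, h i) ^ 2) / (m ^ 2 * n.choose m) := by
        simp only [mul_pow, ← mul_sum]
        field_simp
    _ ≤ ((n - 1).choose (m - 1) : ℕ) * (∑ i, h i ^ 2) / (m ^ 2 * n.choose m) := by
        gcongr
        exact sum_powersetCard_sq_sum_le hm (sum_sub_mean_eq_zero g)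
    _ = (∑ i, h i ^ 2) / n / m := by
        field_simp
        linear_combination (∑ i, h i ^ 2) * hcount
    _ ≤ (∑ i, g i ^ 2) / n / m := by
        gcongr ?_ / _ / _
        exact sum_sub_mean_sq_le_sum_sq g

end

theorem expected_absolute_error_bound_general
    {𝒳 𝒴 : Type*} [Fintype 𝒳] [Fintype 𝒴]
    (f₁ : 𝒳 × 𝒴 → ℝ) (n m : ℕ) (hm : 0 < m) (hmn : m ≤ n) :
    ∀ (x : Fin n → 𝒳) (y : Fin n → 𝒴),
      (∑ I ∈ Finset.powersetCard m (Finset.univ : Finset (Fin n)),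
          |(1 / (m : ℝ)) * ∑ i ∈ I, f₁ (x i, y i)
            - (1 / (n : ℝ)) * ∑ i : Fin n, f₁ (x i, y i)|) / (n.choose m : ℝ)
        ≤ Real.sqrt (∑ ab : 𝒳 × 𝒴, (f₁ ab) ^ 2) / Real.sqrt (m : ℝ) := by
  intro x y
  set C := ∑ ab : 𝒳 × 𝒴, f₁ ab ^ 2
  set err : Finset (Fin n) → ℝ :=
    fun I => (1 / m : ℝ) * ∑ i ∈ I, f₁ (x i, y i) - (1 / n : ℝ) * ∑ i, f₁ (x i, y i)
  have hmean_sq : (∑ i, f₁ (x i, y i) ^ 2) / n ≤ C := by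
    rw [div_le_iff₀ (by exact_mod_cast hm.trans_le hmn)]
    simpa [mul_comm] using sum_le_card_nsmul univ _ C fun i _ =>
      single_le_sum (fun ab _ => sq_nonneg (f₁ ab)) (mem_univ (x i, y i))
  have hmean_sq_err : (∑ I ∈ powersetCard m univ, err I ^ 2) / n.choose m
      ≤ (∑ i, f₁ (x i, y i) ^ 2) / n / m := by
    simpa only [Fintype.card_fin] using
      sum_sq_sampling_error_div_choose_le (fun i => f₁ (x i, y i)) hm (by rwa [Fintype.card_fin])
  calc _ ≤ √((∑ I ∈ powersetCard m univ, err I ^ 2) / n.choose m) := by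
        simpa only [card_powersetCard, card_univ, Fintype.card_fin] using
          sum_abs_div_card_le_sqrt_sum_sq_div_card (powersetCard m univ) err
    _ ≤ √(C / m) := Real.sqrt_le_sqrt <|
        hmean_sq_err.trans (div_le_div_of_nonneg_right hmean_sq m.cast_nonneg)
    _ = √C / √m := Real.sqrt_div' _ m.cast_nonneg

/-- Accuracy guarantee of Theorem 1: for every pair of deterministic sequences,
the expected absolute error of the estimate from m random subsamples is at most
‖f₁‖₂/√m, independent of n. -/
theorem expected_absolute_error_bound
    {𝒳 𝒴 : Type*} [Fintype 𝒳] [Nonempty 𝒳] [Fintype 𝒴] [Nonempty 𝒴]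
    (f₁ : 𝒳 × 𝒴 → ℝ) (n m : ℕ) (hn : 2 ≤ n) (hm : 0 < m) (hmn : m ≤ n) :
    ∀ (x : Fin n → 𝒳) (y : Fin n → 𝒴),
      (∑ I ∈ Finset.powersetCard m (Finset.univ : Finset (Fin n)),
          |(1 / (m : ℝ)) * ∑ i ∈ I, f₁ (x i, y i)
            - (1 / (n : ℝ)) * ∑ i : Fin n, f₁ (x i, y i)|) / (n.choose m : ℝ)
        ≤ Real.sqrt (∑ ab : 𝒳 × 𝒴, (f₁ ab) ^ 2) / Real.sqrt (m : ℝ) :=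
  expected_absolute_error_bound_general f₁ n m hm hmn
end
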